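/- arXiv:2203.01384 — 3 statements merged into one kernel-verified Lean document; each statement's English description precedes it below -/
import Mathlib

section
/- For every integer n ≥ 1, setting x = e^{-1/n} (i.e. x = (1/e)^{1/n}), one has min{1 - x^n, P_n(x)} ≥ 1 - 1/e, where P_n(x) = ∑_{i=0}^{n-1} (1/(i+1)) C(n-1,i) x^{n-1-i} (1-x)^i. -/
/-!
Multiplying `P_n(x)` by `n (1 - x)` and using `n C(n-1, i) = (i + 1) C(n, i+1)` turns it into the
binomial expansion of `(x + (1 - x))^n` without its `x^n` term, so `n (1 - x) P_n(x) = 1 - x^n`.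
At `x = e^{-1/n}` we have `x^n = 1/e`, and `e^{-1/n} ≥ 1 - 1/n` gives `0 < n (1 - x) ≤ 1`,
hence `P_n(x) = (1 - x^n) / (n (1 - x)) ≥ 1 - x^n = 1 - 1/e`.
-/

open Finset

section BatchedProphetPoly

variable {K : Type*} [Field K] [CharZero K]

def batchedProphetPoly (n : ℕ) (x : K) : K :=
  ∑ i ∈ range n, (1 / (i + 1 : K)) * (n - 1).choose i * x ^ (n - 1 - i) * (1 - x) ^ i

theorem mul_batchedProphetPoly (n : ℕ) (x : K) :
    n * (1 - x) * batchedProphetPoly n x = 1 - x ^ n := by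
  cases n with
  | zero => simp [batchedProphetPoly]
  | succ m =>
    have binomial : (1 : K) = ∑ i ∈ range (m + 1),
        (1 - x) ^ (i + 1) * x ^ (m - i) * (m + 1).choose (i + 1) + x ^ (m + 1) := by
      have h := add_pow (1 - x) x (m + 1)
      rw [sub_add_cancel, one_pow, sum_range_succ'] at h
      simpa using h
    have term (i : ℕ) : (m + 1 : K) * (1 - x) *
        ((1 / (i + 1 : K)) * m.choose i * x ^ (m - i) * (1 - x) ^ i) =
        (1 - x) ^ (i + 1) * x ^ (m - i) * (m + 1).choose (i + 1) := by
      have hchoose : ((m + 1 : ℕ) : K) * m.choose i = (m + 1).choose (i + 1) * (i + 1) := by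
        exact_mod_cast Nat.add_one_mul_choose_eq m i
      push_cast at hchoose
      field_simp
      linear_combination x ^ (m - i) * (1 - x) ^ (i + 1) * hchoose
    simp only [batchedProphetPoly, add_tsub_cancel_right, mul_sum, Nat.cast_succ, term]
    linear_combination -binomial

end BatchedProphetPoly

theorem stmt_1 (n : ℕ) (hn : 1 ≤ n) (x : ℝ) (hx : x = Real.exp (-1 / n)) :
    min (1 - x ^ n)
      (∑ i ∈ Finset.range n, (1 / (i + 1 : ℝ)) * (Nat.choose (n - 1) i : ℝ) *
        x ^ (n - 1 - i) * (1 - x) ^ i) ≥ 1 - 1 / Real.exp 1 := by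
  change min (1 - x ^ n) (batchedProphetPoly n x) ≥ _
  have hn_pos : (0 : ℝ) < n := by exact_mod_cast hn
  have hxn : x ^ n = 1 / Real.exp 1 := by
    rw [hx, ← Real.exp_nat_mul, mul_div_cancel₀ _ hn_pos.ne', Real.exp_neg, one_div]
  have hx_lt : x < 1 := by
    rw [hx, Real.exp_lt_one_iff]
    exact div_neg_of_neg_of_pos (by norm_num) hn_pos
  have hscale_pos : 0 < n * (1 - x) := mul_pos hn_pos (by linarith)
  have hscale_le : n * (1 - x) ≤ 1 := by
    have hx_ge := Real.one_sub_le_exp_neg (1 / n)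
    rw [← neg_div, ← hx] at hx_ge
    rw [← le_div_iff₀' hn_pos]
    linarith
  have hpoly : batchedProphetPoly n x = (1 - x ^ n) / (n * (1 - x)) := by
    rw [eq_div_iff hscale_pos.ne', mul_comm, mul_batchedProphetPoly]
  have hnum : 0 ≤ 1 - x ^ n := by
    rw [sub_nonneg]
    exact pow_le_one₀ (hx ▸ (Real.exp_pos _).le) hx_lt.le
  rw [ge_iff_le, le_min_iff, hpoly, ← hxn]
  exact ⟨le_rfl, le_div_self hnum hscale_pos hscale_le⟩
end

section
/- For integers n > m ≥ 1, r ≥ 1 and 0 ≤ i ≤ m-1, setting x = 1 - m/n, one has C(n,i) · (1 - x^r)^i · x^{r(n-i)} ≥ ((1-m/n)^{rn}) · (mr)^i / i!. -/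
/-!
With `x = 1 - m/n`, split `x^(rn) = x^(r(n-i)) · (x^r)^i`. Bernoulli's inequality for `1/x`
gives `x^r · mr ≤ (n - m)(1 - x^r)`, and `(n - m)^i ≤ n!/(n-i)! = C(n,i) · i!` because every
factor of the descending factorial is at least `n - i + 1 ≥ n - m`.
-/

/-- Bernoulli's inequality `(1/x)^r ≥ 1 + r(1/x - 1)`, cleared of denominators. -/
theorem mul_one_sub_mul_pow_le_mul_one_sub_pow {x : ℝ} (hx : 0 ≤ x) (r : ℕ) :
    r * (1 - x) * x ^ r ≤ x * (1 - x ^ r) := by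
  induction r with
  | zero => simp
  | succ r ih =>
    have hsign : 0 ≤ (1 - x) * (1 - x ^ r) := by
      rcases le_total x 1 with h | h
      · exact mul_nonneg (sub_nonneg.2 h) (sub_nonneg.2 (pow_le_one₀ hx h))
      · exact mul_nonneg_of_nonpos_of_nonpos (sub_nonpos.2 h) (sub_nonpos.2 (one_le_pow₀ h))
    rw [pow_succ]
    push_cast
    nlinarith [mul_le_mul_of_nonneg_left ih hx, mul_nonneg hx hsign]

theorem Nat.sub_pow_le_descFactorial {n m i : ℕ} (hi : i ≤ m + 1) :
    (n - m) ^ i ≤ n.descFactorial i :=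
  (Nat.pow_le_pow_left (by omega) i).trans (Nat.pow_sub_le_descFactorial n i)

theorem stmt_12_general (n m r i : ℕ) (hmn : m < n) (hi : i ≤ m - 1)
    (x : ℝ) (hx : x = 1 - (m : ℝ) / n) :
    (Nat.choose n i : ℝ) * (1 - x ^ r) ^ i * x ^ (r * (n - i))
      ≥ (1 - (m : ℝ) / n) ^ (r * n) * ((m : ℝ) * r) ^ i / (Nat.factorial i) := by
  have hn : (0 : ℝ) < n := by exact_mod_cast (Nat.zero_le m).trans_lt hmn
  have hm : (m : ℝ) = n * (1 - x) := by rw [hx]; field_simp; ring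
  have hx0 : 0 < x := by
    rw [hx, sub_pos, div_lt_one hn]; exact_mod_cast hmn
  have hxr : x ^ r ≤ 1 := pow_le_one₀ hx0.le (by rw [hx]; linarith [div_nonneg m.cast_nonneg hn.le])
  have hkey : x ^ r * (m * r) ≤ (n - m) * (1 - x ^ r) := by
    have := mul_le_mul_of_nonneg_left (mul_one_sub_mul_pow_le_mul_one_sub_pow hx0.le r) hn.le
    rw [hm]; linarith
  have hdesc : ((n : ℝ) - m) ^ i ≤ n.choose i * i.factorial := by
    have := Nat.sub_pow_le_descFactorial (n := n) (show i ≤ m + 1 by omega)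
    rw [Nat.descFactorial_eq_factorial_mul_choose] at this
    rw [← Nat.cast_sub hmn.le, mul_comm]; exact_mod_cast this
  have hsplit : x ^ (r * n) = x ^ (r * (n - i)) * (x ^ r) ^ i := by
    rw [← pow_mul, ← pow_add, ← Nat.mul_add, Nat.sub_add_cancel (by omega)]
  rw [ge_iff_le, ← hx, hsplit, div_le_iff₀ (by positivity)]
  calc x ^ (r * (n - i)) * (x ^ r) ^ i * (m * r) ^ i
      = x ^ (r * (n - i)) * (x ^ r * (m * r)) ^ i := by ring
    _ ≤ x ^ (r * (n - i)) * (((n : ℝ) - m) ^ i * (1 - x ^ r) ^ i) := by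
      rw [← mul_pow]; gcongr
    _ ≤ x ^ (r * (n - i)) * ((n.choose i * i.factorial) * (1 - x ^ r) ^ i) := by
      gcongr
    _ = _ := by ring

theorem stmt_12 (n m r i : ℕ) (hm : 1 ≤ m) (hmn : m < n) (hr : 1 ≤ r) (hi : i ≤ m - 1)
    (x : ℝ) (hx : x = 1 - (m : ℝ) / n) :
    (Nat.choose n i : ℝ) * (1 - x ^ r) ^ i * x ^ (r * (n - i))
      ≥ (1 - (m : ℝ) / n) ^ (r * n) * ((m : ℝ) * r) ^ i / (Nat.factorial i) :=
  stmt_12_general n m r i hmn hi x hx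
end

section
/- Let G be a continuous strictly increasing CDF, n ≥ 2, and let τ_1 > τ_2 > … > τ_k > 0 be given with G(τ_k) > 0. Define β_0 = 1 (or any β_0 > G(τ_1)) and β_j = G(τ_j). Set p_k = τ_k and recursively p_j = τ_j - (τ_j - p_{j+1}) · ((β_j^n - β_{j+1}^n)/(β_j - β_{j+1})) · ((β_{j-1} - β_j)/(β_{j-1}^n - β_j^n)) for j = k-1,…,1. Then p_1 > p_2 > … > p_k and τ_j ≥ p_j for all j ∈ {1,…,k}. -/
lemma stmt_14_sum_pos (n : ℕ) (hn : 1 ≤ n) (a b : ℝ) (ha : 0 < a) (hb : 0 < b) :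
    0 < ∑ i ∈ Finset.range n, a ^ i * b ^ (n - 1 - i) := by
  apply Finset.sum_pos
  · intro i _
    positivity
  · exact ⟨0, Finset.mem_range.mpr (by omega)⟩

lemma stmt_14_sum_lt (n : ℕ) (hn : 2 ≤ n) (a b c d : ℝ) (hb : 0 < b) (hbd : b < d)
    (ha : 0 ≤ a) (hac : a ≤ c) :
    ∑ i ∈ Finset.range n, a ^ i * b ^ (n - 1 - i) <
      ∑ i ∈ Finset.range n, c ^ i * d ^ (n - 1 - i) := by
  refine Finset.sum_lt_sum (fun i _ => ?_) ⟨0, Finset.mem_range.mpr (by omega), ?_⟩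
  · exact mul_le_mul (pow_le_pow_left₀ ha hac i) (pow_le_pow_left₀ hb.le hbd.le _)
      (pow_nonneg hb.le _) (pow_nonneg (ha.trans hac) _)
  · simp only [pow_zero, one_mul]
    exact pow_lt_pow_left₀ hbd hb.le (by omega)

lemma stmt_14_geom (n : ℕ) (a b : ℝ) (h : a ≠ b) :
    (a ^ n - b ^ n) / (a - b) = ∑ i ∈ Finset.range n, a ^ i * b ^ (n - 1 - i) := by
  rw [div_eq_iff (sub_ne_zero.mpr h)]
  exact (geom_sum₂_mul a b n).symm

theorem stmt_14 (G : ℝ → ℝ) (hGcont : Continuous G) (hGmono : StrictMono G)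
    (n : ℕ) (hn : 2 ≤ n) (k : ℕ) (hk : 1 ≤ k) (τ : ℕ → ℝ)
    (hτdec : ∀ j, 1 ≤ j → j < k → τ (j + 1) < τ j)
    (hτpos : 0 < τ k) (hGτk : 0 < G (τ k)) (hGτ1 : G (τ 1) < 1)
    (β : ℕ → ℝ) (hβ0 : β 0 = 1) (hβ : ∀ j, 1 ≤ j → j ≤ k → β j = G (τ j))
    (p : ℕ → ℝ) (hpk : p k = τ k)
    (hp : ∀ j, 1 ≤ j → j ≤ k - 1 →
      p j = τ j - (τ j - p (j + 1)) *
        ((β j ^ n - β (j + 1) ^ n) / (β j - β (j + 1))) *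
        ((β (j - 1) - β j) / (β (j - 1) ^ n - β j ^ n))) :
    (∀ j, 1 ≤ j → j < k → p (j + 1) < p j) ∧ (∀ j, 1 ≤ j → j ≤ k → p j ≤ τ j) := by
  -- τ is decreasing on [1, k]
  have hτmono : ∀ i j, 1 ≤ i → i ≤ j → j ≤ k → τ j ≤ τ i := by
    intro i j h1 hij hjk
    induction j, hij using Nat.le_induction with
    | base => exact le_refl _
    | succ j hj ih =>
      have := hτdec j (h1.trans hj) (by omega)
      have := ih (by omega)
      linarith
  have hβpos : ∀ j, 1 ≤ j → j ≤ k → 0 < β j := by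
    intro j h1 hjk
    rw [hβ j h1 hjk]
    exact lt_of_lt_of_le hGτk (hGmono.monotone (hτmono j k h1 hjk le_rfl))
  have hβlt : ∀ j, 1 ≤ j → j < k → β (j + 1) < β j := by
    intro j h1 hjk
    rw [hβ j h1 (by omega), hβ (j + 1) (by omega) (by omega)]
    exact hGmono (hτdec j h1 hjk)
  have hβchain : ∀ j, 1 ≤ j → j < k → β j < β (j - 1) := by
    intro j h1 hjk
    rcases Nat.eq_or_lt_of_le h1 with h | h
    · have : β 1 = G (τ 1) := hβ 1 le_rfl hk
      simp only [← h]
      simp [this, hβ0]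
      calc G (τ 1) ≤ G (τ 1) := le_refl _
        _ < 1 := hGτ1
    · have h2 := hβlt (j - 1) (by omega) (by omega)
      rwa [show j - 1 + 1 = j from by omega] at h2

  have main : ∀ m j, 1 ≤ j → j + m = k → p j ≤ τ j ∧ (j < k → p (j + 1) < p j) := by
    intro m
    induction m with
    | zero =>
      intro j h1 hjk
      simp only [Nat.add_zero] at hjk
      subst hjk
      exact ⟨le_of_eq hpk, fun h => absurd h (lt_irrefl j)⟩
    | succ m ih =>
      intro j h1 hjk
      have hjlt : j < k := by omega
      have hpj1 : p (j + 1) ≤ τ (j + 1) := (ih (j + 1) (by omega) (by omega)).1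
      have hτlt : τ (j + 1) < τ j := hτdec j h1 hjlt
      have hd : 0 < τ j - p (j + 1) := by linarith
      -- β facts
      have hb : 0 < β j := hβpos j h1 hjlt.le
      have hc : 0 < β (j + 1) := hβpos (j + 1) (by omega) (by omega)
      have hcb : β (j + 1) < β j := hβlt j h1 hjlt
      have hba : β j < β (j - 1) := hβchain j h1 hjlt
      set S1 := ∑ i ∈ Finset.range n, β j ^ i * β (j + 1) ^ (n - 1 - i) with hS1
      set S2 := ∑ i ∈ Finset.range n, β (j - 1) ^ i * β j ^ (n - 1 - i) with hS2
      have hS1pos : 0 < S1 := stmt_14_sum_pos n (by omega) _ _ hb hc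
      have hS2pos : 0 < S2 := stmt_14_sum_pos n (by omega) _ _ (hb.trans hba) hb
      have hS1S2 : S1 < S2 := stmt_14_sum_lt n hn _ _ _ _ hc hcb hb.le hba.le
      have e1 : (β j ^ n - β (j + 1) ^ n) / (β j - β (j + 1)) = S1 :=
        stmt_14_geom n _ _ hcb.ne'
      have e2 : (β (j - 1) - β j) / (β (j - 1) ^ n - β j ^ n) = 1 / S2 := by
        have hx : β (j - 1) - β j ≠ 0 := sub_ne_zero.mpr hba.ne'
        have : β (j - 1) ^ n - β j ^ n = S2 * (β (j - 1) - β j) :=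
          (geom_sum₂_mul _ _ n).symm
        rw [this, eq_div_iff hS2pos.ne']
        field_simp
      have hq : τ j - p j = (τ j - p (j + 1)) * (S1 / S2) := by
        rw [hp j h1 (by omega), e1, e2]
        ring
      have hRpos : 0 < S1 / S2 := div_pos hS1pos hS2pos
      have hRlt : S1 / S2 < 1 := (div_lt_one hS2pos).mpr hS1S2
      constructor
      · nlinarith
      · intro _
        nlinarith
  refine ⟨fun j h1 h2 => (main (k - j) j h1 (by omega)).2 h2,
    fun j h1 h2 => (main (k - j) j h1 (by omega)).1⟩
end
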